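/- Let F be a set of functions from Baire space to itself containing all 1-Lipschitz functions and closed under composition. The following are equivalent: (i) for every countable family {f_k : k ∈ ω} ⊆ F, the function ⊕̄_k f_k defined by (⊕̄_k f_k)(x) = f_{x(0)}(x⁻), where x⁻ = ⟨x(n+1) : n ∈ ω⟩, belongs to F; (ii) for every countable family {f_k : k ∈ ω} ⊆ F, the function equal to f_k on the basic clopen set N_⟨k⟩ = {x : x(0) = k} belongs to F, and every Lipschitz function (of any constant) belongs to F. -/
import Mathlib


open scoped Classical

/-- The standard metric on Baire space: `d x y = (1/2)^m` where `m` is least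
with `x m ≠ y m`, and `0` if `x = y`. -/
noncomputable def bd (x y : ℕ → ℕ) : ℝ :=
  if h : x = y then 0 else (1 / 2 : ℝ) ^ (Nat.find (Function.ne_iff.mp h))

/-- `f` is Lipschitz with constant `C` with respect to `bd`. -/
def LipWith (C : ℝ) (f : (ℕ → ℕ) → ℕ → ℕ) : Prop :=
  ∀ x y, bd (f x) (f y) ≤ C * bd x y

/-- The set of all Lipschitz functions (of any constant `2^k`, `k ∈ ℤ`). -/
def Lip : Set ((ℕ → ℕ) → ℕ → ℕ) := {f | ∃ k : ℤ, LipWith ((2 : ℝ) ^ k) f}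

namespace Stmt4Aux

lemma bd_nonneg (x y : ℕ → ℕ) : 0 ≤ bd x y := by
  unfold bd; split
  · exact le_rfl
  · positivity

lemma bd_le_one (x y : ℕ → ℕ) : bd x y ≤ 1 := by
  unfold bd; split
  · norm_num
  · exact pow_le_one₀ (by norm_num) (by norm_num)

lemma bd_le_pow (x y : ℕ → ℕ) (m : ℕ) (h : ∀ i < m, x i = y i) :
    bd x y ≤ (1/2 : ℝ) ^ m := by
  unfold bd; split
  · positivity
  · rename_i hxy
    have hm : m ≤ Nat.find (Function.ne_iff.mp hxy) := by
      by_contra hc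
      push_neg at hc
      exact (Nat.find_spec (Function.ne_iff.mp hxy)) (h _ hc)
    exact pow_le_pow_of_le_one (by norm_num) (by norm_num) hm

lemma bd_eq (x y : ℕ → ℕ) (h : x ≠ y) :
    bd x y = (1/2 : ℝ) ^ (Nat.find (Function.ne_iff.mp h)) := dif_neg h

lemma agree_below (x y : ℕ → ℕ) (h : x ≠ y) :
    ∀ i < Nat.find (Function.ne_iff.mp h), x i = y i := by
  intro i hi
  have := Nat.find_min (Function.ne_iff.mp h) hi
  exact not_not.mp this

/-- duplicate the first coordinate -/
def dup (x : ℕ → ℕ) : ℕ → ℕ := fun i => match i with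
  | 0 => x 0
  | j + 1 => x j

/-- prepend a zero -/
def u (x : ℕ → ℕ) : ℕ → ℕ := fun i => match i with
  | 0 => 0
  | j + 1 => x j

/-- the shift (tail) map -/
def t (x : ℕ → ℕ) : ℕ → ℕ := fun n => x (n + 1)

lemma lip_dup : LipWith 1 dup := by
  intro x y
  rcases eq_or_ne x y with rfl | h
  · simp [bd, bd_nonneg]
  · rw [bd_eq x y h, one_mul]
    apply bd_le_pow
    intro i hi
    match i with
    | 0 =>
      exact agree_below x y h 0 hi
    | j + 1 =>
      exact agree_below x y h j (Nat.lt_of_succ_lt hi)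

lemma lip_t (x y : ℕ → ℕ) : bd (t x) (t y) ≤ 2 * bd x y := by
  rcases eq_or_ne x y with rfl | h
  · simp [bd, bd_nonneg]
  · rw [bd_eq x y h]
    rcases Nat.eq_zero_or_eq_succ_pred (Nat.find (Function.ne_iff.mp h)) with h0 | hs
    · rw [h0]
      have := bd_le_one (t x) (t y)
      norm_num
      linarith
    · set n := Nat.find (Function.ne_iff.mp h) with hn
      obtain ⟨m, hm⟩ : ∃ m, n = m + 1 := ⟨n - 1, hs⟩
      rw [hm]
      have hle : bd (t x) (t y) ≤ (1/2 : ℝ) ^ m := by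
        apply bd_le_pow
        intro i hi
        exact agree_below x y h (i + 1) (by omega)
      calc bd (t x) (t y) ≤ (1/2 : ℝ) ^ m := hle
        _ = 2 * (1/2 : ℝ) ^ (m + 1) := by ring

lemma lip_u (x y : ℕ → ℕ) : bd (u x) (u y) ≤ (1/2 : ℝ) * bd x y := by
  rcases eq_or_ne x y with rfl | h
  · simp [bd, bd_nonneg]
  · rw [bd_eq x y h]
    set n := Nat.find (Function.ne_iff.mp h) with hn
    have hle : bd (u x) (u y) ≤ (1/2 : ℝ) ^ (n + 1) := by
      apply bd_le_pow
      intro i hi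
      match i with
      | 0 => rfl
      | j + 1 => exact congrArg (fun z => z) (agree_below x y h j (by omega))
    calc bd (u x) (u y) ≤ (1/2 : ℝ) ^ (n + 1) := hle
      _ = (1/2 : ℝ) * (1/2 : ℝ) ^ n := by ring

lemma lip_u_iter (m : ℕ) (x y : ℕ → ℕ) :
    bd (u^[m] x) (u^[m] y) ≤ (1/2 : ℝ) ^ m * bd x y := by
  induction m with
  | zero => simp
  | succ m ih =>
    rw [Function.iterate_succ_apply', Function.iterate_succ_apply']
    calc bd (u (u^[m] x)) (u (u^[m] y)) ≤ (1/2 : ℝ) * bd (u^[m] x) (u^[m] y) :=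
          lip_u _ _
      _ ≤ (1/2 : ℝ) * ((1/2 : ℝ) ^ m * bd x y) := by
          have := ih; nlinarith [bd_nonneg (u^[m] x) (u^[m] y)]
      _ = (1/2 : ℝ) ^ (m + 1) * bd x y := by ring

lemma t_u (x : ℕ → ℕ) : t (u x) = x := rfl

lemma t_u_iter (m : ℕ) (x : ℕ → ℕ) : t^[m] (u^[m] x) = x := by
  induction m with
  | zero => rfl
  | succ m ih =>
    rw [Function.iterate_succ_apply, Function.iterate_succ_apply', t_u]
    exact ih

end Stmt4Aux

open Stmt4Aux in
theorem stmt4 (F : Set ((ℕ → ℕ) → ℕ → ℕ))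
    (hcomp : ∀ f ∈ F, ∀ g ∈ F, f ∘ g ∈ F)
    (hLip1 : {f | LipWith 1 f} ⊆ F) :
    (∀ fs : ℕ → (ℕ → ℕ) → ℕ → ℕ, (∀ k, fs k ∈ F) →
      (fun x => fs (x 0) (fun n => x (n + 1))) ∈ F) ↔
    ((∀ fs : ℕ → (ℕ → ℕ) → ℕ → ℕ, (∀ k, fs k ∈ F) →
      (fun x => fs (x 0) x) ∈ F) ∧ Lip ⊆ F) := by
  have hid : (id : (ℕ → ℕ) → ℕ → ℕ) ∈ F := by
    apply hLip1
    intro x y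
    rw [one_mul]
    exact le_rfl
  have hdup : dup ∈ F := hLip1 lip_dup
  constructor
  · intro h1
    have ht : t ∈ F := by
      have := h1 (fun _ => id) (fun _ => hid)
      exact this
    have hiter : ∀ m : ℕ, ∀ g ∈ F, t^[m] ∘ g ∈ F := by
      intro m
      induction m with
      | zero => intro g hg; simpa using hg
      | succ m ih =>
        intro g hg
        have : t^[m + 1] ∘ g = t^[m] ∘ (t ∘ g) := by
          funext x
          rfl
        rw [this]
        exact ih _ (hcomp t ht g hg)
    constructor
    · intro fs hfs
      have hmem := h1 fs hfs
      have := hcomp _ hmem dup hdup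
      have heq : ((fun x => fs (x 0) fun n => x (n + 1)) ∘ dup)
          = (fun x => fs (x 0) x) := by
        funext x
        rfl
      rwa [heq] at this
    · rintro f ⟨k, hf⟩
      rcases le_or_gt k 0 with hk | hk
      · apply hLip1
        intro x y
        have h2k : (2 : ℝ) ^ k ≤ 1 := zpow_le_one_of_nonpos₀ (by norm_num) hk
        calc bd (f x) (f y) ≤ (2 : ℝ) ^ k * bd x y := hf x y
          _ ≤ 1 * bd x y := by nlinarith [bd_nonneg x y]
      · set m := k.toNat with hm
        have hkm : (2 : ℝ) ^ k = (2 : ℝ) ^ m := by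
          rw [hm, ← zpow_natCast]
          congr 1
          omega
        have hg : LipWith 1 (u^[m] ∘ f) := by
          intro x y
          calc bd (u^[m] (f x)) (u^[m] (f y)) ≤ (1/2 : ℝ) ^ m * bd (f x) (f y) :=
                lip_u_iter m _ _
            _ ≤ (1/2 : ℝ) ^ m * ((2 : ℝ) ^ k * bd x y) := by
                have := hf x y
                have hp : (0:ℝ) < (1/2 : ℝ) ^ m := by positivity
                nlinarith
            _ = ((1/2 : ℝ) ^ m * (2 : ℝ) ^ m) * bd x y := by rw [hkm]; ring
            _ = 1 * bd x y := by
                rw [← mul_pow]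
                norm_num
        have hgF : (u^[m] ∘ f) ∈ F := hLip1 hg
        have hfeq : f = t^[m] ∘ (u^[m] ∘ f) := by
          funext x
          exact (t_u_iter m (f x)).symm
        rw [hfeq]
        exact hiter m _ hgF
  · rintro ⟨h2, hL⟩
    intro fs hfs
    have ht : t ∈ F := by
      apply hL
      exact ⟨1, by
        intro x y
        have := lip_t x y
        simpa using this⟩
    have := h2 (fun k => fs k ∘ t) (fun k => hcomp _ (hfs k) t ht)
    exact this
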